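/- arXiv:2309.16665 — 8 statements merged into one kernel-verified Lean document; each statement's English description precedes it below -/
import Mathlib

section
/- Fix a positive integer λ and real coefficients (p_k)_{k≥0} with |p_k| weakly decreasing, and let 0 < ε, δ ≤ 1. For x ∈ (−1,1) define f(x) = Σ_{k=0}^∞ p_k x^{λk} (assumed convergent for each such x) and P_n(x) = Σ_{k=0}^{n−1} p_k x^{λk}. Suppose either (i) all p_k have the same sign (p_k ≥ 0 for all k, or p_k ≤ 0 for all k), the series Σ p_k (1−δ)^{λk} converges, and N = |f(1−δ)|; or (ii) λ is odd, the signs of p_k alternate (i.e., (−1)^k p_k ≥ 0 for all k, or (−1)^k p_k ≤ 0 for all k), the series Σ p_k (−1+δ)^{λk} converges, and N = |f(−1+δ)|. Then n ≥ (λδ)^{−1} · log(N/ε) implies |P_n(x) − f(x)| ≤ ε for all x ∈ (−1+δ, 1−δ). -/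
set_option maxHeartbeats 1000000


/-- Truncation error bound for power series with weakly decreasing
coefficient magnitudes: if all `p k` have the same sign (with `N = |f(1−δ)|`), or `λ` is odd
and the signs of `p k` alternate (with `N = |f(−1+δ)|`), then `n ≥ (λδ)⁻¹ log(N/ε)` implies
`|P_n(x) − f(x)| ≤ ε` for all `x ∈ (−1+δ, 1−δ)`. -/
theorem stmt_2 (lam : ℕ) (hlam : 0 < lam) (p : ℕ → ℝ)
    (hdec : ∀ k l : ℕ, k ≤ l → |p l| ≤ |p k|)
    (ε δ : ℝ) (hε : 0 < ε) (hε1 : ε ≤ 1) (hδ : 0 < δ) (hδ1 : δ ≤ 1)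
    (hconv : ∀ x : ℝ, -1 < x → x < 1 → Summable (fun k => p k * x ^ (lam * k)))
    (N : ℝ)
    (hcase :
      (((∀ k, 0 ≤ p k) ∨ (∀ k, p k ≤ 0)) ∧
        Summable (fun k => p k * (1 - δ) ^ (lam * k)) ∧
        N = |∑' k : ℕ, p k * (1 - δ) ^ (lam * k)|) ∨
      (Odd lam ∧
        ((∀ k, 0 ≤ (-1 : ℝ) ^ k * p k) ∨ (∀ k, (-1 : ℝ) ^ k * p k ≤ 0)) ∧
        Summable (fun k => p k * (-1 + δ) ^ (lam * k)) ∧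
        N = |∑' k : ℕ, p k * (-1 + δ) ^ (lam * k)|))
    (n : ℕ) (hn : ((lam : ℝ) * δ)⁻¹ * Real.log (N / ε) ≤ n)
    (x : ℝ) (hx : -1 + δ < x) (hx' : x < 1 - δ) :
    |(∑ k ∈ Finset.range n, p k * x ^ (lam * k)) - ∑' k : ℕ, p k * x ^ (lam * k)| ≤ ε := by
  have hδlt : δ < 1 := by linarith
  set y : ℝ := 1 - δ with hy
  have hy0 : (0:ℝ) < y := by simp only [hy]; linarith
  have hy1 : y < 1 := by simp only [hy]; linarith
  have hxy : |x| < y := abs_lt.mpr ⟨by simp only [hy]; linarith, hx'⟩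
  -- reduce the two cases to a single normal form
  obtain ⟨hsum, hN⟩ :
      Summable (fun k => |p k| * y ^ (lam * k)) ∧
      N = ∑' k : ℕ, |p k| * y ^ (lam * k) := by
    rcases hcase with ⟨hsign, hs, hNe⟩ | ⟨hodd, hsign, hs, hNe⟩
    · rcases hsign with hpos | hneg
      · have he : ∀ k, |p k| * y ^ (lam * k) = p k * y ^ (lam * k) := fun k => by
          rw [abs_of_nonneg (hpos k)]
        refine ⟨hs.congr fun k => (he k).symm, ?_⟩
        rw [hNe, abs_of_nonneg (tsum_nonneg fun k =>
          mul_nonneg (hpos k) (pow_nonneg hy0.le _))]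
        exact (tsum_congr he).symm
      · have he : ∀ k, |p k| * y ^ (lam * k) = -(p k * y ^ (lam * k)) := fun k => by
          rw [abs_of_nonpos (hneg k), neg_mul]
        refine ⟨hs.neg.congr fun k => (he k).symm, ?_⟩
        rw [hNe, abs_of_nonpos (tsum_nonpos fun k =>
          mul_nonpos_of_nonpos_of_nonneg (hneg k) (pow_nonneg hy0.le _))]
        rw [← tsum_neg]
        exact (tsum_congr he).symm
    · have hrw : ∀ k, p k * (-1 + δ) ^ (lam * k)
          = ((-1:ℝ) ^ k * p k) * y ^ (lam * k) := fun k => by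
        have h1 : (-1 + δ : ℝ) = -y := by simp [hy]; ring
        have h2 : ((-1:ℝ)) ^ (lam * k) = (-1:ℝ) ^ k := by
          rw [pow_mul, hodd.neg_one_pow]
        rw [h1, neg_pow, h2]; ring
      have habs : ∀ k, |(-1:ℝ) ^ k * p k| = |p k| := fun k => by
        rw [abs_mul, abs_pow, abs_neg, abs_one, one_pow, one_mul]
      rcases hsign with hpos | hneg
      · have he : ∀ k, |p k| * y ^ (lam * k) = p k * (-1 + δ) ^ (lam * k) := fun k => by
          rw [hrw k, ← habs k, abs_of_nonneg (hpos k)]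
        refine ⟨hs.congr fun k => (he k).symm, ?_⟩
        rw [hNe, abs_of_nonneg (tsum_nonneg fun k => by
          rw [hrw k]; exact mul_nonneg (hpos k) (pow_nonneg hy0.le _))]
        exact (tsum_congr he).symm
      · have he : ∀ k, |p k| * y ^ (lam * k) = -(p k * (-1 + δ) ^ (lam * k)) := fun k => by
          rw [hrw k, ← habs k, abs_of_nonpos (hneg k), neg_mul]
        refine ⟨hs.neg.congr fun k => (he k).symm, ?_⟩
        rw [hNe, abs_of_nonpos (tsum_nonpos fun k => by
          rw [hrw k]; exact mul_nonpos_of_nonpos_of_nonneg (hneg k) (pow_nonneg hy0.le _))]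
        rw [← tsum_neg]
        exact (tsum_congr he).symm
  have hN0 : 0 ≤ N := hN ▸ tsum_nonneg fun k =>
    mul_nonneg (abs_nonneg _) (pow_nonneg hy0.le _)
  have hsumx : Summable (fun k => p k * x ^ (lam * k)) :=
    hconv x (by linarith [abs_lt.mp hxy]) (by linarith [abs_lt.mp hxy])
  -- split the sum
  have hsplit := Summable.sum_add_tsum_nat_add n hsumx
  have hdiff : (∑ k ∈ Finset.range n, p k * x ^ (lam * k))
      - ∑' k : ℕ, p k * x ^ (lam * k)
      = -(∑' k : ℕ, p (k + n) * x ^ (lam * (k + n))) := by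
    rw [← hsplit]; ring
  rw [hdiff, abs_neg]
  -- bound the tail
  have htail : Summable (fun k => p (k + n) * x ^ (lam * (k + n))) :=
    (summable_nat_add_iff n).mpr hsumx
  have hbound : ∀ k, |p (k + n) * x ^ (lam * (k + n))|
      ≤ y ^ (lam * n) * (|p k| * y ^ (lam * k)) := by
    intro k
    rw [abs_mul, abs_pow]
    have h1 : |p (k + n)| ≤ |p k| := hdec k (k + n) (Nat.le_add_right _ _)
    have h2 : |x| ^ (lam * (k + n)) ≤ y ^ (lam * (k + n)) :=
      pow_le_pow_left₀ (abs_nonneg _) hxy.le _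
    calc |p (k + n)| * |x| ^ (lam * (k + n))
        ≤ |p k| * y ^ (lam * (k + n)) :=
          mul_le_mul h1 h2 (pow_nonneg (abs_nonneg _) _) (abs_nonneg _)
      _ = y ^ (lam * n) * (|p k| * y ^ (lam * k)) := by
          rw [Nat.mul_add, pow_add]; ring
  have h3 : |∑' k : ℕ, p (k + n) * x ^ (lam * (k + n))|
      ≤ y ^ (lam * n) * N := by
    have := tsum_of_norm_bounded (hsum.hasSum.mul_left (y ^ (lam * n)))
      (fun k => by rw [Real.norm_eq_abs]; exact hbound k)
    rw [Real.norm_eq_abs] at this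
    rw [hN]
    exact this
  refine h3.trans ?_
  -- final estimate
  rcases le_or_gt N ε with hNε | hNε
  · calc y ^ (lam * n) * N ≤ 1 * N := by
          have : y ^ (lam * n) ≤ 1 := pow_le_one₀ hy0.le hy1.le
          exact mul_le_mul_of_nonneg_right this hN0
      _ = N := one_mul N
      _ ≤ ε := hNε
  · have hNpos : 0 < N := hε.trans hNε
    have hld : 0 < (lam : ℝ) * δ := by positivity
    have h1 : Real.log (N / ε) ≤ (lam : ℝ) * δ * n := by
      rw [inv_mul_le_iff₀ hld] at hn
      linarith [hn]
    have h2 : y ^ (lam * n) ≤ Real.exp (-((lam : ℝ) * δ * n)) := by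
      have hle : y ≤ Real.exp (-δ) := by
        have := Real.add_one_le_exp (-δ)
        simp only [hy]; linarith
      calc y ^ (lam * n) ≤ Real.exp (-δ) ^ (lam * n) :=
            pow_le_pow_left₀ hy0.le hle _
        _ = Real.exp (-((lam : ℝ) * δ * n)) := by
            rw [← Real.exp_nat_mul]
            congr 1
            push_cast
            ring
    have h4 : Real.exp (-((lam : ℝ) * δ * n)) ≤ ε / N := by
      calc Real.exp (-((lam : ℝ) * δ * n)) ≤ Real.exp (-Real.log (N / ε)) :=
            Real.exp_le_exp.mpr (by linarith)
        _ = ε / N := by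
            rw [Real.exp_neg, Real.exp_log (by positivity), inv_div]
    calc y ^ (lam * n) * N ≤ (ε / N) * N :=
          mul_le_mul_of_nonneg_right (h2.trans h4) hN0
      _ = ε := by field_simp
end

section
/- Let f(x) = √((1+x)/2) and for n ≥ 1 let B_n = f∘f∘⋯∘f denote its n-fold iterate, defined on (−1, ∞). Then for every n ≥ 1, every integer k ≥ 1, and every x ∈ (−1, ∞), the k-th derivative B_n^{(k)}(x) exists, is nonzero, and has sign (−1)^{k+1}. Consequently, setting C_n(x) = 2^n · B_n'(x), for every k ≥ 1 and x ∈ (−1, ∞), the k-th derivative C_n^{(k)}(x) is nonzero with sign (−1)^k. -/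
/-!
Call `g` alternating up to order `n` on `s` if `(-1)^j g⁽ʲ⁾ > 0` on `s` for all `j ≤ n`.
By Leibniz's rule this class is closed under products, and by induction on the order
`c ∘ h` is alternating whenever `c` and `h'` are, since `-(c ∘ h)' = ((-c') ∘ h) · h'`.
Now `f' = (1 + x)^(-1/2) / (2√2)` is alternating to every order on `(-1, ∞)` and `f` maps this
interval into itself, so the chain rule `(f ∘ h)' = (f' ∘ h) · h'` propagates the property from
`f'` to every `B_n'`. Both claims are statements about `B_n'`, as `C_n⁽ᵏ⁾ = 2^n B_n⁽ᵏ⁺¹⁾`.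
-/

open Set

def AlternatingDerivsOn (n : ℕ) (g : ℝ → ℝ) (s : Set ℝ) : Prop :=
  ∀ j ≤ n, ∀ x ∈ s, 0 < (-1 : ℝ) ^ j * iteratedDerivWithin j g s x

section AlternatingDerivsOn

variable {n : ℕ} {g w v c h : ℝ → ℝ} {s t : Set ℝ}

theorem AlternatingDerivsOn.pos (hg : AlternatingDerivsOn n g s) {x : ℝ} (hx : x ∈ s) :
    0 < g x := by
  simpa using hg 0 n.zero_le x hx

theorem AlternatingDerivsOn.mono (hg : AlternatingDerivsOn n g s) {m : ℕ} (hmn : m ≤ n) :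
    AlternatingDerivsOn m g s :=
  fun j hj => hg j (hj.trans hmn)

theorem AlternatingDerivsOn.congr (hg : AlternatingDerivsOn n g s) (hgw : EqOn g w s) :
    AlternatingDerivsOn n w s := by
  intro j hj x hx
  rw [← iteratedDerivWithin_congr hgw hx]
  exact hg j hj x hx

theorem alternatingDerivsOn_zero_iff : AlternatingDerivsOn 0 g s ↔ ∀ x ∈ s, 0 < g x :=
  ⟨fun hg _ hx => hg.pos hx, fun hg j hj x hx => by
    obtain rfl := Nat.le_zero.1 hj
    simpa using hg x hx⟩

theorem alternatingDerivsOn_succ_iff :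
    AlternatingDerivsOn (n + 1) g s ↔
      (∀ x ∈ s, 0 < g x) ∧ AlternatingDerivsOn n (-derivWithin g s) s := by
  have hshift : ∀ j x, (-1 : ℝ) ^ j * iteratedDerivWithin j (-derivWithin g s) s x =
      (-1) ^ (j + 1) * iteratedDerivWithin (j + 1) g s x := by
    intro j x
    rw [iteratedDerivWithin_neg, iteratedDerivWithin_succ']
    ring
  constructor
  · intro hg
    exact ⟨fun x hx => hg.pos hx, fun j hj x hx => (hshift j x).symm ▸ hg (j + 1) (by omega) x hx⟩
  · rintro ⟨hpos, hg'⟩ (_ | j) hj x hx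
    · simpa using hpos x hx
    · exact hshift j x ▸ hg' j (by omega) x hx

theorem AlternatingDerivsOn.mul (hs : UniqueDiffOn ℝ s) (hw : ContDiffOn ℝ n w s)
    (hv : ContDiffOn ℝ n v s) (hw' : AlternatingDerivsOn n w s)
    (hv' : AlternatingDerivsOn n v s) : AlternatingDerivsOn n (w * v) s := by
  intro j hj x hx
  have hjn : (j : WithTop ℕ∞) ≤ n := by exact_mod_cast hj
  rw [iteratedDerivWithin_mul hx hs (hw.of_le hjn x hx) (hv.of_le hjn x hx), Finset.mul_sum]
  refine Finset.sum_pos (fun i hi => ?_) Finset.nonempty_range_add_one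
  have hij : i ≤ j := Nat.lt_succ_iff.1 (Finset.mem_range.1 hi)
  calc 0 < (j.choose i : ℝ) * (((-1) ^ i * iteratedDerivWithin i w s x) *
        ((-1) ^ (j - i) * iteratedDerivWithin (j - i) v s x)) :=
        mul_pos (by exact_mod_cast j.choose_pos hij)
          (mul_pos (hw' i (hij.trans hj) x hx) (hv' (j - i) (by omega) x hx))
    _ = (-1) ^ j * (j.choose i * iteratedDerivWithin i w s x *
        iteratedDerivWithin (j - i) v s x) := by
      rw [← Nat.add_sub_cancel' hij, pow_add, Nat.add_sub_cancel_left]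
      ring

theorem AlternatingDerivsOn.comp (hs : UniqueDiffOn ℝ s) (ht : UniqueDiffOn ℝ t)
    (hc : ContDiffOn ℝ n c t) (hh : ContDiffOn ℝ n h s) (hst : MapsTo h s t)
    (hc' : AlternatingDerivsOn n c t) (hh' : AlternatingDerivsOn n (derivWithin h s) s) :
    AlternatingDerivsOn n (c ∘ h) s := by
  induction n generalizing c with
  | zero =>
    exact alternatingDerivsOn_zero_iff.2 fun x hx => hc'.pos (hst hx)
  | succ n ih =>
    obtain ⟨-, hc''⟩ := alternatingDerivsOn_succ_iff.1 hc'
    have hcn : ContDiffOn ℝ n (-derivWithin c t) t := (hc.derivWithin ht (by norm_cast)).neg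
    have hhn : ContDiffOn ℝ n h s := hh.of_le (by norm_cast; omega)
    have hchain : EqOn ((-derivWithin c t) ∘ h * derivWithin h s) (-derivWithin (c ∘ h) s) s := by
      intro y hy
      simp only [Pi.mul_apply, Function.comp_apply, Pi.neg_apply]
      rw [derivWithin_comp y (hc.differentiableOn (by simp) _ (hst hy))
        (hh.differentiableOn (by simp) _ hy) hst]
      ring
    refine alternatingDerivsOn_succ_iff.2 ⟨fun x hx => hc'.pos (hst hx), ?_⟩
    exact ((ih hcn hhn hc'' (hh'.mono n.le_succ)).mul hs (hcn.comp hhn hst)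
      (hh.derivWithin hs le_rfl) (hh'.mono n.le_succ)).congr hchain

theorem AlternatingDerivsOn.derivWithin_comp (hs : UniqueDiffOn ℝ s) (ht : UniqueDiffOn ℝ t)
    (hc : ContDiffOn ℝ (n + 1) c t) (hh : ContDiffOn ℝ (n + 1) h s) (hst : MapsTo h s t)
    (hc' : AlternatingDerivsOn n (derivWithin c t) t)
    (hh' : AlternatingDerivsOn n (derivWithin h s) s) :
    AlternatingDerivsOn n (derivWithin (c ∘ h) s) s := by
  have hhn : ContDiffOn ℝ n h s := hh.of_le (by norm_cast; omega)
  have hchain : EqOn (derivWithin c t ∘ h * derivWithin h s) (derivWithin (c ∘ h) s) s :=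
    fun y hy => (_root_.derivWithin_comp y (hc.differentiableOn (by simp) _ (hst hy))
      (hh.differentiableOn (by simp) _ hy) hst).symm
  exact ((hc'.comp hs ht (hc.derivWithin ht le_rfl) hhn hst hh').mul hs
    ((hc.derivWithin ht le_rfl).comp hhn hst) (hh.derivWithin hs le_rfl) hh').congr hchain

end AlternatingDerivsOn

theorem hasDerivAt_const_mul_one_add_rpow (a r : ℝ) {x : ℝ} (hx : -1 < x) :
    HasDerivAt (fun y => a * (1 + y) ^ r) (a * r * (1 + x) ^ (r - 1)) x := by
  have h := (((hasDerivAt_id x).const_add 1).rpow_const (p := r)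
    (Or.inl (by linarith : (0 : ℝ) < 1 + x).ne')).const_mul a
  simpa only [id, one_mul, mul_assoc] using h

theorem alternatingDerivsOn_const_mul_one_add_rpow {a r : ℝ} (ha : 0 < a) (hr : r < 0) (n : ℕ) :
    AlternatingDerivsOn n (fun x => a * (1 + x) ^ r) (Ioi (-1)) := by
  induction n generalizing a r with
  | zero =>
    exact alternatingDerivsOn_zero_iff.2 fun x hx =>
      mul_pos ha (Real.rpow_pos_of_pos (by linarith [mem_Ioi.1 hx]) r)
  | succ n ih =>
    refine alternatingDerivsOn_succ_iff.2 ⟨fun x hx => ?_, ?_⟩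
    · exact mul_pos ha (Real.rpow_pos_of_pos (by linarith [mem_Ioi.1 hx]) r)
    · refine (ih (a := a * -r) (r := r - 1) (by nlinarith) (by linarith)).congr fun x hx => ?_
      rw [Pi.neg_apply, ((hasDerivAt_const_mul_one_add_rpow a r hx).hasDerivWithinAt).derivWithin
        (uniqueDiffOn_Ioi _ x hx)]
      ring

/-- The map `f`, named after `f (cos θ) = cos (θ / 2)` for `θ ∈ [0, π]`. -/
noncomputable def halfAngle (x : ℝ) : ℝ := √((1 + x) / 2)

theorem halfAngle_eqOn_rpow :
    EqOn halfAngle (fun x => (√2)⁻¹ * (1 + x) ^ (1 / 2 : ℝ)) (Ioi (-1)) := by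
  intro x hx
  have : (0 : ℝ) ≤ 1 + x := by linarith [mem_Ioi.1 hx]
  rw [halfAngle, Real.sqrt_div this, Real.sqrt_eq_rpow, div_eq_inv_mul]

theorem mapsTo_halfAngle : MapsTo halfAngle (Ioi (-1)) (Ioi (-1)) := fun _ _ =>
  lt_of_lt_of_le (by norm_num) (Real.sqrt_nonneg _)

theorem contDiffOn_halfAngle {n : WithTop ℕ∞} : ContDiffOn ℝ n halfAngle (Ioi (-1)) := by
  intro x hx
  have : (1 + x) / 2 ≠ 0 := (by linarith [mem_Ioi.1 hx] : (0 : ℝ) < (1 + x) / 2).ne'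
  exact ((Real.contDiffAt_sqrt this).comp x
    ((contDiffAt_const.add contDiffAt_id).div_const 2)).contDiffWithinAt

theorem alternatingDerivsOn_derivWithin_halfAngle (n : ℕ) :
    AlternatingDerivsOn n (derivWithin halfAngle (Ioi (-1))) (Ioi (-1)) := by
  refine (alternatingDerivsOn_const_mul_one_add_rpow (a := (√2)⁻¹ * (1 / 2))
    (r := 1 / 2 - 1) (by positivity) (by norm_num) n).congr fun x hx => ?_
  rw [derivWithin_congr halfAngle_eqOn_rpow (halfAngle_eqOn_rpow hx),
    ((hasDerivAt_const_mul_one_add_rpow _ _ hx).hasDerivWithinAt).derivWithin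
      (uniqueDiffOn_Ioi _ x hx)]

theorem contDiffOn_halfAngle_iterate {m : WithTop ℕ∞} (n : ℕ) :
    ContDiffOn ℝ m halfAngle^[n] (Ioi (-1)) := by
  induction n with
  | zero => exact contDiffOn_id
  | succ n ih =>
    rw [Function.iterate_succ']
    exact contDiffOn_halfAngle.comp ih (mapsTo_halfAngle.iterate n)

theorem alternatingDerivsOn_derivWithin_halfAngle_iterate {n : ℕ} (hn : 1 ≤ n) (m : ℕ) :
    AlternatingDerivsOn m (derivWithin halfAngle^[n] (Ioi (-1))) (Ioi (-1)) := by
  induction n, hn using Nat.le_induction with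
  | base => simpa using alternatingDerivsOn_derivWithin_halfAngle m
  | succ n _ ih =>
    rw [Function.iterate_succ']
    exact (alternatingDerivsOn_derivWithin_halfAngle m).derivWithin_comp
      (uniqueDiffOn_Ioi _) (uniqueDiffOn_Ioi _) contDiffOn_halfAngle
      (contDiffOn_halfAngle_iterate n) (mapsTo_halfAngle.iterate n) ih

/-- Let `f(x) = √((1+x)/2)` and `B_n = f^{∘n}` (n ≥ 1). For every `k ≥ 1`
and `x ∈ (−1, ∞)`, the `k`-th derivative `B_n⁽ᵏ⁾(x)` is nonzero with sign `(−1)^{k+1}`;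
consequently, with `C_n(x) = 2^n · B_n'(x)`, the `k`-th derivative `C_n⁽ᵏ⁾(x)` is nonzero
with sign `(−1)^k`. -/
theorem stmt_7 (n k : ℕ) (hn : 1 ≤ n) (hk : 1 ≤ k) (x : ℝ) (hx : -1 < x) :
    0 < (-1 : ℝ) ^ (k + 1) *
        iteratedDeriv k ((fun y => Real.sqrt ((1 + y) / 2))^[n]) x ∧
    0 < (-1 : ℝ) ^ k *
        iteratedDeriv k
          (fun y => (2 : ℝ) ^ n * deriv ((fun z => Real.sqrt ((1 + z) / 2))^[n]) y) x := by
  change 0 < _ * iteratedDeriv k halfAngle^[n] x ∧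
    0 < _ * iteratedDeriv k (fun y => 2 ^ n * deriv halfAngle^[n] y) x
  have hB : ∀ j, 0 < (-1 : ℝ) ^ j * iteratedDeriv (j + 1) halfAngle^[n] x := fun j => by
    have h := alternatingDerivsOn_derivWithin_halfAngle_iterate hn j j le_rfl x hx
    rwa [← iteratedDerivWithin_succ', iteratedDerivWithin_of_isOpen isOpen_Ioi hx] at h
  obtain ⟨j, rfl⟩ : ∃ j, k = j + 1 := ⟨k - 1, by omega⟩
  constructor
  · convert hB j using 1
    ring
  · rw [iteratedDeriv_const_mul_field, ← iteratedDeriv_succ', mul_left_comm]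
    exact mul_pos (by positivity) (hB (j + 1))
end

section
/- Let f(x) = √((1+x)/2) and B_n = f^{∘n} its n-fold iterate (n ≥ 1). Then for every t ∈ (−π, π), sin(t) · B_n'(cos t) = 2^{−n} · sin(t / 2^n). Consequently, for every x ∈ (−1, 1), |2^n · B_n'(x)| ≤ (1 − x²)^{−1/2}. -/
open Real

private noncomputable def fB : ℝ → ℝ := fun x => Real.sqrt ((1 + x) / 2)

private lemma fB_pos {x : ℝ} (hx : -1 < x) : 0 < fB x := by
  apply Real.sqrt_pos.2; linarith

private lemma fB_diff {x : ℝ} (hx : -1 < x) : DifferentiableAt ℝ fB x := by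
  have h : ((1 + x) / 2 : ℝ) ≠ 0 := by intro hc; linarith [hc]
  have hs : DifferentiableAt ℝ (Real.sqrt ·) ((1 + x) / 2) := (Real.hasDerivAt_sqrt h).differentiableAt
  exact hs.comp x (by fun_prop)

private lemma iter_pos : ∀ n, ∀ x : ℝ, -1 < x → -1 < fB^[n] x := by
  intro n
  induction n with
  | zero => intro x hx; simpa using hx
  | succ n ih =>
    intro x hx
    rw [Function.iterate_succ_apply]
    exact ih _ (by linarith [fB_pos hx])

private lemma iter_diff : ∀ n, ∀ x : ℝ, -1 < x → DifferentiableAt ℝ (fB^[n]) x := by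
  intro n
  induction n with
  | zero => intro x hx; simpa using differentiableAt_id'
  | succ n ih =>
    intro x hx
    rw [Function.iterate_succ]
    exact (ih _ (by linarith [fB_pos hx])).comp x (fB_diff hx)

private lemma iter_cos : ∀ n, ∀ t : ℝ, -π ≤ t → t ≤ π →
    fB^[n] (Real.cos t) = Real.cos (t / 2 ^ n) := by
  intro n
  induction n with
  | zero => intro t _ _; simp
  | succ n ih =>
    intro t h1 h2
    rw [Function.iterate_succ_apply]
    have hf : fB (Real.cos t) = Real.cos (t / 2) := (Real.cos_half h1 h2).symm
    rw [hf, ih (t / 2) (by linarith [Real.pi_pos]) (by linarith [Real.pi_pos])]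
    ring_nf

private lemma cos_gt_neg_one {t : ℝ} (h1 : -π < t) (h2 : t < π) : -1 < Real.cos t := by
  have hc : 0 < Real.cos (t / 2) :=
    Real.cos_pos_of_mem_Ioo ⟨by linarith, by linarith⟩
  have := Real.cos_sq (t / 2)
  have ht : 2 * (t / 2) = t := by ring
  rw [ht] at this
  nlinarith [hc]

private lemma key (n : ℕ) {t : ℝ} (ht : t ∈ Set.Ioo (-Real.pi) Real.pi) :
    Real.sin t * deriv (fB^[n]) (Real.cos t) = Real.sin (t / 2 ^ n) / 2 ^ n := by
  obtain ⟨h1, h2⟩ := ht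
  have hct : -1 < Real.cos t := cos_gt_neg_one h1 h2
  have hBd : HasDerivAt (fB^[n]) (deriv (fB^[n]) (Real.cos t)) (Real.cos t) :=
    (iter_diff n _ hct).hasDerivAt
  have hcomp : HasDerivAt (fun s => fB^[n] (Real.cos s))
      (deriv (fB^[n]) (Real.cos t) * (-Real.sin t)) t :=
    hBd.comp t (Real.hasDerivAt_cos t)
  have heq : (fun s => Real.cos (s / 2 ^ n)) =ᶠ[nhds t] (fun s => fB^[n] (Real.cos s)) := by
    filter_upwards [Ioo_mem_nhds h1 h2] with s hs
    exact (iter_cos n s hs.1.le hs.2.le).symm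
  have hg : HasDerivAt (fun s => Real.cos (s / 2 ^ n))
      (deriv (fB^[n]) (Real.cos t) * (-Real.sin t)) t :=
    hcomp.congr_of_eventuallyEq heq
  have hg2 : HasDerivAt (fun s : ℝ => Real.cos (s / 2 ^ n))
      (-Real.sin (t / 2 ^ n) * (1 / 2 ^ n)) t :=
    by have := (Real.hasDerivAt_cos (t / 2 ^ n)).comp t ((hasDerivAt_id t).div_const (2 ^ n)); exact this
  have := hg.unique hg2
  have h2n : (0 : ℝ) < 2 ^ n := by positivity
  field_simp at this ⊢
  nlinarith [this]

/-- For `f(x) = √((1+x)/2)` and `B_n = f^{∘n}` (n ≥ 1):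
`sin(t) · B_n'(cos t) = 2^{−n} · sin(t / 2^n)` for every `t ∈ (−π, π)`, and consequently
`|2^n · B_n'(x)| ≤ (1 − x²)^{−1/2}` for every `x ∈ (−1, 1)`. -/
theorem stmt_9 (n : ℕ) (hn : 1 ≤ n) :
    (∀ t : ℝ, t ∈ Set.Ioo (-Real.pi) Real.pi →
      Real.sin t * deriv ((fun x => Real.sqrt ((1 + x) / 2))^[n]) (Real.cos t) =
        Real.sin (t / 2 ^ n) / 2 ^ n) ∧
    (∀ x : ℝ, -1 < x → x < 1 →
      |(2 : ℝ) ^ n * deriv ((fun y => Real.sqrt ((1 + y) / 2))^[n]) x| ≤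
        (1 - x ^ 2) ^ (-(1 : ℝ) / 2)) := by
  have hfB : (fun x => Real.sqrt ((1 + x) / 2)) = fB := rfl
  rw [hfB]
  constructor
  · intro t ht; exact key n ht
  · intro x hx1 hx2
    set t := Real.arccos x with htdef
    have ht0 : 0 < t := Real.arccos_pos.2 hx2
    have htpi : t < π := lt_of_le_of_ne (Real.arccos_le_pi x)
      (fun h => absurd (Real.arccos_eq_pi.1 h) (by linarith))
    have hmem : t ∈ Set.Ioo (-Real.pi) Real.pi :=
      ⟨by linarith [Real.pi_pos], htpi⟩
    have hk := key n hmem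
    rw [Real.cos_arccos hx1.le hx2.le, Real.sin_arccos] at hk
    have hs : (0 : ℝ) < Real.sqrt (1 - x ^ 2) := Real.sqrt_pos.2 (by nlinarith)
    have h2n : (0 : ℝ) < 2 ^ n := by positivity
    have hd : (2 : ℝ) ^ n * deriv (fB^[n]) x = Real.sin (t / 2 ^ n) / Real.sqrt (1 - x ^ 2) := by
      field_simp at hk ⊢
      nlinarith [hk]
    rw [hd, abs_div, abs_of_pos hs]
    have hrp : (1 - x ^ 2 : ℝ) ^ (-(1 : ℝ) / 2) = (Real.sqrt (1 - x ^ 2))⁻¹ := by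
      rw [Real.sqrt_eq_rpow, ← Real.rpow_neg (by nlinarith)]
      norm_num
    rw [hrp, div_eq_mul_inv]
    have : |Real.sin (t / 2 ^ n)| ≤ 1 := Real.abs_sin_le_one _
    calc |Real.sin (t / 2 ^ n)| * (Real.sqrt (1 - x ^ 2))⁻¹
        ≤ 1 * (Real.sqrt (1 - x ^ 2))⁻¹ := by
          apply mul_le_mul_of_nonneg_right this (by positivity)
      _ = (Real.sqrt (1 - x ^ 2))⁻¹ := one_mul _
end

section
/- Let m ≥ 0 be an integer and (p_j)_{j=−m}^{m} real numbers such that |Σ_{j=−m}^{m} p_j · e^{ijt}| = 1 for every t ∈ ℝ. Then exactly one of the coefficients p_j is nonzero, and that coefficient equals 1 or −1. Equivalently, a real-coefficient Laurent polynomial that is unimodular on the entire unit circle is ± a single monomial z^j. -/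
/-- A real-coefficient Laurent polynomial `Σ_{j=−m}^m p_j e^{ijt}` that is
unimodular on the entire unit circle has exactly one nonzero coefficient, and that
coefficient equals `1` or `−1`. -/
theorem stmt_13 (m : ℕ) (p : ℤ → ℝ)
    (hsupp : ∀ j : ℤ, j ∉ Finset.Icc (-(m : ℤ)) (m : ℤ) → p j = 0)
    (h : ∀ t : ℝ,
      ‖(∑ j ∈ Finset.Icc (-(m : ℤ)) (m : ℤ),
          (p j : ℂ) * Complex.exp (Complex.I * (j : ℂ) * (t : ℂ)))‖ = 1) :
    ∃ j₀ ∈ Finset.Icc (-(m : ℤ)) (m : ℤ),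
      (p j₀ = 1 ∨ p j₀ = -1) ∧ ∀ j : ℤ, j ≠ j₀ → p j = 0 := by
  classical
  set P : Polynomial ℂ :=
    ∑ k ∈ Finset.range (2*m+1), Polynomial.monomial k ((p ((k:ℤ) - m) : ℂ)) with hPdef
  set Q : Polynomial ℂ :=
    ∑ k ∈ Finset.range (2*m+1), Polynomial.monomial k ((p ((m:ℤ) - k) : ℂ)) with hQdef
  have hPc : ∀ k : ℕ, k < 2*m+1 → P.coeff k = (p ((k:ℤ) - m) : ℂ) := by
    intro k hk
    rw [hPdef, Polynomial.finset_sum_coeff]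
    simp only [Polynomial.coeff_monomial]
    rw [Finset.sum_ite_eq' (Finset.range (2*m+1)) k]
    simp [hk]
  have hQc : ∀ k : ℕ, k < 2*m+1 → Q.coeff k = (p ((m:ℤ) - k) : ℂ) := by
    intro k hk
    rw [hQdef, Polynomial.finset_sum_coeff]
    simp only [Polynomial.coeff_monomial]
    rw [Finset.sum_ite_eq' (Finset.range (2*m+1)) k]
    simp [hk]
  have hPev : ∀ t : ℝ, P.eval (Complex.exp (Complex.I * t)) =
      Complex.exp (Complex.I * t) ^ m *
        (∑ j ∈ Finset.Icc (-(m : ℤ)) (m : ℤ),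
          (p j : ℂ) * Complex.exp (Complex.I * (j : ℂ) * (t : ℂ))) := by
    intro t
    rw [hPdef, Polynomial.eval_finset_sum, Finset.mul_sum]
    refine Finset.sum_nbij' (fun k => (k:ℤ) - m) (fun j => (j + m).toNat) ?_ ?_ ?_ ?_ ?_
    · intro k hk
      simp only [Finset.mem_range] at hk
      simp only [Finset.mem_Icc]; omega
    · intro j hj
      simp only [Finset.mem_Icc] at hj
      simp only [Finset.mem_range]; omega
    · intro k hk; simp only [Finset.mem_range] at hk; beta_reduce; omega
    · intro j hj; simp only [Finset.mem_Icc] at hj; beta_reduce; omega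
    · intro k hk
      simp only [Finset.mem_range] at hk
      rw [Polynomial.eval_monomial]
      have key : (Complex.exp (Complex.I * t)) ^ k =
          (Complex.exp (Complex.I * t)) ^ m *
            Complex.exp (Complex.I * ((((k:ℤ) - m : ℤ)) : ℂ) * (t:ℂ)) := by
        rw [← Complex.exp_nat_mul, ← Complex.exp_nat_mul, ← Complex.exp_add]
        congr 1
        push_cast
        ring
      rw [key]
      ring
  have hQev : ∀ t : ℝ, Q.eval (Complex.exp (Complex.I * t)) =
      Complex.exp (Complex.I * t) ^ m *
        (starRingEnd ℂ) (∑ j ∈ Finset.Icc (-(m : ℤ)) (m : ℤ),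
          (p j : ℂ) * Complex.exp (Complex.I * (j : ℂ) * (t : ℂ))) := by
    intro t
    rw [hQdef, Polynomial.eval_finset_sum, map_sum, Finset.mul_sum]
    refine Finset.sum_nbij' (fun k => (m:ℤ) - k) (fun j => (m - j).toNat) ?_ ?_ ?_ ?_ ?_
    · intro k hk
      simp only [Finset.mem_range] at hk
      simp only [Finset.mem_Icc]; omega
    · intro j hj
      simp only [Finset.mem_Icc] at hj
      simp only [Finset.mem_range]; omega
    · intro k hk; simp only [Finset.mem_range] at hk; beta_reduce; omega
    · intro j hj; simp only [Finset.mem_Icc] at hj; beta_reduce; omega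
    · intro k hk
      simp only [Finset.mem_range] at hk
      rw [Polynomial.eval_monomial, map_mul, Complex.conj_ofReal, ← Complex.exp_conj]
      have hc2 : (starRingEnd ℂ) (Complex.I * ((((m:ℤ) - k : ℤ)) : ℂ) * (t:ℂ)) =
          -(Complex.I * ((((m:ℤ) - k : ℤ)) : ℂ) * (t:ℂ)) := by
        simp [map_mul, Complex.conj_I, Complex.conj_ofReal]
      rw [hc2]
      have key : (Complex.exp (Complex.I * t)) ^ k =
          (Complex.exp (Complex.I * t)) ^ m *
            Complex.exp (-(Complex.I * ((((m:ℤ) - k : ℤ)) : ℂ) * (t:ℂ))) := by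
        rw [← Complex.exp_nat_mul, ← Complex.exp_nat_mul, ← Complex.exp_add]
        congr 1
        push_cast
        ring
      rw [key]
      ring
  have hroot : ∀ t : ℝ,
      (P * Q - Polynomial.X ^ (2*m)).eval (Complex.exp (Complex.I * t)) = 0 := by
    intro t
    have hS := h t
    set S := ∑ j ∈ Finset.Icc (-(m : ℤ)) (m : ℤ),
          (p j : ℂ) * Complex.exp (Complex.I * (j : ℂ) * (t : ℂ)) with hSdef
    have hSS : S * (starRingEnd ℂ) S = 1 := by
      rw [Complex.mul_conj, Complex.normSq_eq_norm_sq, hS]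
      norm_num
    simp only [Polynomial.eval_sub, Polynomial.eval_mul, Polynomial.eval_pow,
      Polynomial.eval_X, hPev t, hQev t]
    rw [show Complex.exp (Complex.I * t) ^ m * S *
        (Complex.exp (Complex.I * t) ^ m * (starRingEnd ℂ) S)
        = Complex.exp (Complex.I * t) ^ (2*m) * (S * (starRingEnd ℂ) S) by ring, hSS]
    ring
  have hPQ : P * Q = Polynomial.X ^ (2*m) := by
    have h0 : P * Q - Polynomial.X ^ (2*m) = 0 := by
      apply Polynomial.eq_zero_of_infinite_isRoot
      refine Set.infinite_of_injective_forall_mem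
        (f := fun n : ℕ => Complex.exp (Complex.I * ((1 / (n+1) : ℝ) : ℂ))) ?_ ?_
      · intro a b hab
        simp only at hab
        rw [Complex.exp_eq_exp_iff_exists_int] at hab
        obtain ⟨n, hn⟩ := hab
        have hI : Complex.I * ((1 / ((a:ℝ)+1) : ℝ) : ℂ) =
            Complex.I * ((((1 / ((b:ℝ)+1) : ℝ)) : ℂ) + n * (2 * Real.pi)) := by
          rw [hn]; push_cast; ring
        have hcc := mul_left_cancel₀ Complex.I_ne_zero hI
        have hr : (1 / ((a:ℝ)+1) : ℝ) = (1 / ((b:ℝ)+1) : ℝ) + n * (2 * Real.pi) := by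
          exact_mod_cast hcc
        have ha0 : (0:ℝ) < 1 / ((a:ℝ)+1) := by positivity
        have ha1 : (1 / ((a:ℝ)+1)) ≤ 1 := by
          rw [div_le_one (by positivity)]; linarith [Nat.cast_nonneg (α := ℝ) a]
        have hb0 : (0:ℝ) < 1 / ((b:ℝ)+1) := by positivity
        have hb1 : (1 / ((b:ℝ)+1)) ≤ 1 := by
          rw [div_le_one (by positivity)]; linarith [Nat.cast_nonneg (α := ℝ) b]
        have hn0 : n = 0 := by
          by_contra hne
          have hpi := Real.pi_gt_three
          have h1 : (1:ℝ) ≤ |(n:ℝ)| := by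
            rw [← Int.cast_abs]
            exact_mod_cast Int.one_le_abs hne
          rcases le_or_gt 1 (n:ℝ) with hge | hlt
          · nlinarith
          · have : (n:ℝ) ≤ -1 := by
              rcases abs_cases (n:ℝ) with ⟨he, _⟩ | ⟨he, _⟩ <;> linarith
            nlinarith
        rw [hn0] at hr
        rw [Int.cast_zero, zero_mul, add_zero] at hr
        field_simp at hr
        exact_mod_cast (show (a:ℝ) = b by linarith)
      · intro n
        exact hroot (1 / ((n:ℝ)+1) : ℝ)
    exact sub_eq_zero.mp h0
  have hX : (Polynomial.X : Polynomial ℂ)^(2*m) ≠ 0 := pow_ne_zero _ Polynomial.X_ne_zero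
  have hPne : P ≠ 0 := by intro h0; rw [h0, zero_mul] at hPQ; exact hX hPQ.symm
  have hQne : Q ≠ 0 := by intro h0; rw [h0, mul_zero] at hPQ; exact hX hPQ.symm
  have hdeg : P.natDegree + Q.natDegree = 2*m := by
    rw [← Polynomial.natDegree_mul hPne hQne, hPQ, Polynomial.natDegree_X_pow]
  have htr : P.natTrailingDegree + Q.natTrailingDegree = 2*m := by
    rw [← Polynomial.natTrailingDegree_mul hPne hQne, hPQ, Polynomial.natTrailingDegree_X_pow]
  have hle1 := Polynomial.natTrailingDegree_le_natDegree P
  have hle2 := Polynomial.natTrailingDegree_le_natDegree Q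
  set d := P.natDegree with hd
  have htrP : P.natTrailingDegree = d := by omega
  have hQd : Q.natDegree = 2*m - d := by omega
  have hd2m : d ≤ 2*m := by omega
  have hcoeffP : ∀ k : ℕ, k ≠ d → P.coeff k = 0 := by
    intro k hk
    rcases lt_or_gt_of_ne hk with hlt | hgt
    · exact Polynomial.coeff_eq_zero_of_lt_natTrailingDegree (by omega)
    · exact Polynomial.coeff_eq_zero_of_natDegree_lt (by omega)
  refine ⟨(d:ℤ) - m, ?_, ?_, ?_⟩
  · simp only [Finset.mem_Icc]; omega
  · have hc := Polynomial.coeff_mul_degree_add_degree P Q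
    rw [hPQ, ← hd, hQd] at hc
    rw [Polynomial.coeff_X_pow] at hc
    rw [if_pos (by omega : d + (2*m - d) = 2*m)] at hc
    have hlp : P.leadingCoeff = P.coeff d := by rw [Polynomial.leadingCoeff, ← hd]
    have hlq : Q.leadingCoeff = Q.coeff (2*m - d) := by rw [Polynomial.leadingCoeff, hQd]
    rw [hlp, hlq, hPc d (by omega), hQc (2*m - d) (by omega)] at hc
    have heq : (m:ℤ) - ((2*m - d : ℕ):ℤ) = (d:ℤ) - m := by omega
    rw [heq] at hc
    have hps : p ((d:ℤ) - m) * p ((d:ℤ) - m) = 1 := by exact_mod_cast hc.symm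
    exact mul_self_eq_one_iff.mp hps
  · intro j hj
    by_cases hmem : j ∈ Finset.Icc (-(m:ℤ)) (m:ℤ)
    · simp only [Finset.mem_Icc] at hmem
      have hkr : (j + m).toNat < 2*m+1 := by omega
      have hkd : (j + m).toNat ≠ d := by omega
      have hz := hcoeffP _ hkd
      rw [hPc _ hkr] at hz
      have hjj : (((j+m).toNat : ℤ)) - m = j := by omega
      rw [hjj] at hz
      exact_mod_cast hz
    · exact hsupp j hmem
end

section
/- For every odd integer n ≥ 1 and every real x, (1 + x²) · (Σ_{k=0}^{n−1} binom(−1/2, k) · x^{2k})² ≥ 1. (The sum is the value at ix of the Taylor polynomial A_n of (1−x²)^{−1/2}, so this states (1+x²) · A_n(ix)² ≥ 1 for odd n.) -/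
/-- The generalized binomial coefficient `binom(α, k) = (∏_{i=0}^{k−1} (α − i)) / k!`. -/
noncomputable def gbinom (α : ℝ) (k : ℕ) : ℝ :=
  (∏ i ∈ Finset.range k, (α - i)) / (Nat.factorial k)

lemma gbinom_zero (α : ℝ) : gbinom α 0 = 1 := by
  simp [gbinom]

lemma gbinom_succ (α : ℝ) (k : ℕ) :
    gbinom α (k + 1) = gbinom α k * (α - k) / (k + 1) := by
  unfold gbinom
  rw [Finset.prod_range_succ, Nat.factorial_succ, div_mul_eq_mul_div, div_div]
  congr 1
  push_cast
  ring

lemma a_rec (k : ℕ) :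
    2 * ((k : ℝ) + 1) * gbinom (-1/2) (k + 1) = -(2 * k + 1) * gbinom (-1/2) k := by
  rw [gbinom_succ]
  have hk1 : ((k : ℝ) + 1) ≠ 0 := by positivity
  field_simp
  ring

lemma a_sign (k : ℕ) : 0 < (-1 : ℝ) ^ k * gbinom (-1/2) k := by
  induction k with
  | zero => simp [gbinom_zero]
  | succ k ih =>
    have hrec := a_rec k
    have hk1 : (0 : ℝ) < (k : ℝ) + 1 := by positivity
    have : gbinom (-1/2) (k + 1) = -(2 * k + 1) / (2 * ((k:ℝ) + 1)) * gbinom (-1/2) k := by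
      field_simp at hrec ⊢
      linarith [hrec]
    rw [this, pow_succ]
    have hpos : (0:ℝ) < (2 * k + 1) / (2 * ((k:ℝ) + 1)) := by positivity
    calc (0:ℝ) < ((2 * k + 1) / (2 * ((k:ℝ) + 1))) * ((-1:ℝ)^k * gbinom (-1/2) k) :=
          mul_pos hpos ih
      _ = (-1:ℝ)^k * (-1) * (-(2 * k + 1) / (2 * ((k:ℝ) + 1)) * gbinom (-1/2) k) := by ring

/-- The key telescoping identity: `2(1+y)P'(y) + P(y) = (2m+1)·a_m·y^m`. -/
lemma key_identity (m : ℕ) (y : ℝ) :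
    2 * (1 + y) * (∑ k ∈ Finset.range (m + 1), gbinom (-1/2) k * ((k : ℝ) * y ^ (k - 1)))
      + ∑ k ∈ Finset.range (m + 1), gbinom (-1/2) k * y ^ k
    = (2 * m + 1) * gbinom (-1/2) m * y ^ m := by
  induction m with
  | zero => simp
  | succ m ih =>
    rw [Finset.sum_range_succ (fun k => gbinom (-1/2) k * ((k : ℝ) * y ^ (k - 1))),
      Finset.sum_range_succ (fun k => gbinom (-1/2) k * y ^ k)]
    have h2 : 2 * ((m : ℝ) + 1) * gbinom (-1/2) (m + 1) = -(2 * m + 1) * gbinom (-1/2) m :=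
      a_rec m
    have hms : (m + 1 : ℕ) - 1 = m := rfl
    rw [hms]
    push_cast
    linear_combination ih + y ^ m * h2

/-- For every odd `n ≥ 1` and every real `x`,
`(1 + x²) · (Σ_{k=0}^{n−1} binom(−1/2, k) · x^{2k})² ≥ 1`. -/
theorem stmt_16 (n : ℕ) (hodd : Odd n) (hn : 1 ≤ n) (x : ℝ) :
    1 ≤ (1 + x ^ 2) * (∑ k ∈ Finset.range n, gbinom (-1/2) k * x ^ (2 * k)) ^ 2 := by
  obtain ⟨m, rfl⟩ : ∃ m, n = m + 1 := ⟨n - 1, (Nat.succ_pred_eq_of_pos hn).symm⟩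
  have hm_even : Even m := by
    rcases hodd with ⟨j, hj⟩
    exact ⟨j, by omega⟩
  -- the partial sum as a function of y (= x²)
  set P : ℝ → ℝ := fun y => ∑ k ∈ Finset.range (m + 1), gbinom (-1/2) k * y ^ k with hP
  set h : ℝ → ℝ := fun y => Real.sqrt (1 + y) * P y with hh
  -- derivative of P
  have hPd : ∀ y : ℝ, HasDerivAt P
      (∑ k ∈ Finset.range (m + 1), gbinom (-1/2) k * ((k : ℝ) * y ^ (k - 1))) y := by
    intro y
    apply HasDerivAt.fun_sum
    intro k _
    exact (hasDerivAt_pow k y).const_mul _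
  -- derivative of h for y > -1
  have hhd : ∀ y : ℝ, -1 < y → HasDerivAt h
      ((2 * m + 1) * gbinom (-1/2) m * y ^ m / (2 * Real.sqrt (1 + y))) y := by
    intro y hy
    have h1 : (0 : ℝ) < 1 + y := by linarith
    have hs : (0 : ℝ) < Real.sqrt (1 + y) := Real.sqrt_pos.mpr h1
    have hsq : HasDerivAt (fun y : ℝ => Real.sqrt (1 + y)) (1 / (2 * Real.sqrt (1 + y))) y := by
      have := (Real.hasDerivAt_sqrt (ne_of_gt h1)).comp y
        ((hasDerivAt_id y).const_add (1 : ℝ))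
      simpa [Function.comp_def] using this
    set D := ∑ k ∈ Finset.range (m + 1), gbinom (-1/2) k * ((k : ℝ) * y ^ (k - 1)) with hD
    have hd := hsq.mul (hPd y)
    refine hd.congr_deriv (Eq.symm ?_)
    have hkey := key_identity m y
    rw [← hD] at hkey
    have hss : Real.sqrt (1 + y) * Real.sqrt (1 + y) = 1 + y :=
      Real.mul_self_sqrt (le_of_lt h1)
    have hs' : Real.sqrt (1 + y) ≠ 0 := ne_of_gt hs
    rw [div_eq_iff (by positivity : (2 * Real.sqrt (1 + y)) ≠ 0)]
    have hexp : (1 / (2 * Real.sqrt (1 + y)) * P y + Real.sqrt (1 + y) * D)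
        * (2 * Real.sqrt (1 + y))
        = P y + 2 * (Real.sqrt (1 + y) * Real.sqrt (1 + y)) * D := by
      field_simp
    have hPy : (∑ k ∈ Finset.range (m + 1), gbinom (-1/2) k * y ^ k) = P y := rfl
    rw [hPy] at hkey
    rw [hexp, hss]
    linarith [hkey]
  -- h is monotone on [0, ∞)
  have hmono : MonotoneOn h (Set.Ici (0 : ℝ)) := by
    apply monotoneOn_of_deriv_nonneg (convex_Ici 0)
    · intro y hy
      have : -1 < y := by simp at hy; linarith
      exact (hhd y this).continuousAt.continuousWithinAt
    · intro y hy
      rw [interior_Ici] at hy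
      have : -1 < y := by simp at hy; linarith
      exact (hhd y this).differentiableAt.differentiableWithinAt
    · intro y hy
      rw [interior_Ici] at hy
      have hy0 : (0 : ℝ) < y := hy
      rw [(hhd y (by linarith)).deriv]
      have h1 : (0 : ℝ) < 1 + y := by linarith
      have ham : 0 < gbinom (-1/2) m := by
        have := a_sign m
        rwa [hm_even.neg_one_pow, one_mul] at this
      positivity
  -- h 0 = 1
  have hP0 : P 0 = 1 := by
    simp only [hP]
    rw [Finset.sum_eq_single 0]
    · simp [gbinom_zero]
    · intro k _ hk
      simp [zero_pow hk]
    · simp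
  have hh0 : h 0 = 1 := by simp [hh, hP0]
  -- conclude
  have hx2 : (0 : ℝ) ≤ x ^ 2 := sq_nonneg x
  have h1 : (1 : ℝ) ≤ h (x ^ 2) := by
    rw [← hh0]
    exact hmono Set.self_mem_Ici hx2 hx2
  have hsqsq : Real.sqrt (1 + x ^ 2) * Real.sqrt (1 + x ^ 2) = 1 + x ^ 2 :=
    Real.mul_self_sqrt (by positivity)
  have hPx : P (x ^ 2) = ∑ k ∈ Finset.range (m + 1), gbinom (-1/2) k * x ^ (2 * k) := by
    simp only [hP]
    apply Finset.sum_congr rfl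
    intro k _
    rw [pow_mul]
  calc (1 : ℝ) ≤ h (x ^ 2) ^ 2 := by nlinarith
    _ = (1 + x ^ 2) * (∑ k ∈ Finset.range (m + 1), gbinom (-1/2) k * x ^ (2 * k)) ^ 2 := by
        simp only [hh, ← hPx]
        rw [mul_pow, Real.sq_sqrt (by positivity : (0:ℝ) ≤ 1 + x ^ 2)]
end

section
/- For x ∈ [−1,1] let W(x) = !![x, i√(1−x²); i√(1−x²), x] and for φ ∈ ℝ let Z(φ) = !![e^{iφ}, 0; 0, e^{−iφ}] (2×2 complex matrices). Then for all x₀, x₁ ∈ [−1, 1], the (0,0) entry of the product W(x₀) · Z(π/4) · W(x₁) · W(x₁) · Z(−π/4) · W(x₀) equals T₂(x₀) · T₂(x₁) = (2x₀²−1)(2x₁²−1). Consequently, substituting x₀ = cos(θ₀+θ₁) and x₁ = cos(θ₀−θ₁) for any θ₀, θ₁ ∈ ℝ, the achieved value equals (T₄(cos θ₀) + T₄(cos θ₁))/2, i.e., cos(2(θ₀+θ₁)) · cos(2(θ₀−θ₁)) = (cos(4θ₀) + cos(4θ₁))/2. -/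
open Real

/-- The signal operator `W(x) = !![x, i√(1−x²); i√(1−x²), x]`. -/
noncomputable def Wmat (x : ℝ) : Matrix (Fin 2) (Fin 2) ℂ :=
  !![(x : ℂ), Complex.I * Complex.ofReal (Real.sqrt (1 - x ^ 2));
     Complex.I * Complex.ofReal (Real.sqrt (1 - x ^ 2)), (x : ℂ)]

/-- The z-rotation `Z(φ) = !![e^{iφ}, 0; 0, e^{−iφ}]`. -/
noncomputable def Zmat (φ : ℝ) : Matrix (Fin 2) (Fin 2) ℂ :=
  !![Complex.exp (Complex.I * (φ : ℂ)), 0; 0, Complex.exp (-(Complex.I * (φ : ℂ)))]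

lemma aux_entry (u v s t a b : ℂ) (hs : s ^ 2 = 1 - u ^ 2) (ht : t ^ 2 = 1 - v ^ 2)
    (hab : a * b = 1) (ha2 : a ^ 2 = Complex.I) (hb2 : b ^ 2 = -Complex.I) :
    ((!![u, Complex.I * s; Complex.I * s, u] : Matrix (Fin 2) (Fin 2) ℂ) *
      !![a, 0; 0, b] * !![v, Complex.I * t; Complex.I * t, v] *
      !![v, Complex.I * t; Complex.I * t, v] * !![b, 0; 0, a] *
      !![u, Complex.I * s; Complex.I * s, u]) 0 0 =
      ((2 * u ^ 2 - 1) * (2 * v ^ 2 - 1) : ℂ) := by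
  have hI : Complex.I ^ 2 = -1 := Complex.I_sq
  simp [Matrix.mul_apply, Fin.sum_univ_two]
  linear_combination
    (u^2 + Complex.I^2 * s^2) * (v^2 + Complex.I^2 * t^2) * hab +
    (2 * u * v * s * t * Complex.I^2) * ha2 +
    (2 * u * v * s * t * Complex.I^2) * hb2 +
    (s^2 * (v^2 + Complex.I^2 * t^2) + (u^2 - s^2) * t^2) * hI -
    (v^2 - t^2) * hs - (2 * u^2 - 1) * ht

lemma key_s17 (x₀ x₁ : ℝ) (hx₀ : x₀ ∈ Set.Icc (-1 : ℝ) 1) (hx₁ : x₁ ∈ Set.Icc (-1 : ℝ) 1) :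
    (Wmat x₀ * Zmat (π / 4) * Wmat x₁ * Wmat x₁ * Zmat (-(π / 4)) * Wmat x₀) 0 0 =
      Complex.ofReal ((2 * x₀ ^ 2 - 1) * (2 * x₁ ^ 2 - 1)) := by
  have h0 : (0:ℝ) ≤ 1 - x₀ ^ 2 := by nlinarith [hx₀.1, hx₀.2]
  have h1 : (0:ℝ) ≤ 1 - x₁ ^ 2 := by nlinarith [hx₁.1, hx₁.2]
  set a : ℂ := Complex.exp (Complex.I * ((π/4 : ℝ) : ℂ)) with hadef
  set b : ℂ := Complex.exp (-(Complex.I * ((π/4 : ℝ) : ℂ))) with hbdef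
  have hab : a * b = 1 := by
    rw [hadef, hbdef, ← Complex.exp_add]; simp
  have ha2 : a ^ 2 = Complex.I := by
    rw [hadef, ← Complex.exp_nat_mul]
    rw [show ((2:ℕ) : ℂ) * (Complex.I * ((π/4 : ℝ):ℂ)) = ((π/2 : ℝ):ℂ) * Complex.I by
      push_cast; ring]
    rw [Complex.exp_mul_I]
    push_cast
    rw [Complex.cos_pi_div_two, Complex.sin_pi_div_two]
    ring
  have hb2 : b ^ 2 = -Complex.I := by
    have h : Complex.I * b ^ 2 = 1 := by
      rw [← ha2, ← mul_pow, hab, one_pow]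
    linear_combination -Complex.I * h + b ^ 2 * Complex.I_sq
  have hZ2 : Zmat (-(π / 4)) = !![b, 0; 0, a] := by
    ext i j
    fin_cases i <;> fin_cases j <;>
      simp [Zmat, hadef, hbdef]
  have hZ1 : Zmat (π / 4) = !![a, 0; 0, b] := by
    ext i j
    fin_cases i <;> fin_cases j <;>
      simp [Zmat, hadef, hbdef]
  rw [Wmat, Wmat, hZ1, hZ2]
  rw [aux_entry (x₀ : ℂ) (x₁ : ℂ) _ _ a b ?_ ?_ hab ha2 hb2]
  · push_cast; ring
  · norm_cast; rw [Real.sq_sqrt h0]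
  · norm_cast; rw [Real.sq_sqrt h1]

/-- The `(0,0)` entry of
`W(x₀)·Z(π/4)·W(x₁)·W(x₁)·Z(−π/4)·W(x₀)` equals `T₂(x₀)·T₂(x₁) = (2x₀²−1)(2x₁²−1)`
for all `x₀, x₁ ∈ [−1,1]`; consequently, substituting `x₀ = cos(θ₀+θ₁)`,
`x₁ = cos(θ₀−θ₁)`, the achieved value equals `(T₄(cos θ₀)+T₄(cos θ₁))/2`, i.e.
`cos(2(θ₀+θ₁))·cos(2(θ₀−θ₁)) = (cos(4θ₀)+cos(4θ₁))/2`. -/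
theorem stmt_17 :
    (∀ x₀ x₁ : ℝ, x₀ ∈ Set.Icc (-1 : ℝ) 1 → x₁ ∈ Set.Icc (-1 : ℝ) 1 →
      (Wmat x₀ * Zmat (π / 4) * Wmat x₁ * Wmat x₁ * Zmat (-(π / 4)) * Wmat x₀) 0 0 =
        Complex.ofReal ((2 * x₀ ^ 2 - 1) * (2 * x₁ ^ 2 - 1))) ∧
    (∀ θ₀ θ₁ : ℝ,
      (Wmat (Real.cos (θ₀ + θ₁)) * Zmat (π / 4) * Wmat (Real.cos (θ₀ - θ₁)) *
          Wmat (Real.cos (θ₀ - θ₁)) * Zmat (-(π / 4)) * Wmat (Real.cos (θ₀ + θ₁))) 0 0 =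
        Complex.ofReal ((Real.cos (4 * θ₀) + Real.cos (4 * θ₁)) / 2)) ∧
    (∀ θ₀ θ₁ : ℝ,
      Real.cos (2 * (θ₀ + θ₁)) * Real.cos (2 * (θ₀ - θ₁)) =
        (Real.cos (4 * θ₀) + Real.cos (4 * θ₁)) / 2) := by
  have third : ∀ θ₀ θ₁ : ℝ,
      Real.cos (2 * (θ₀ + θ₁)) * Real.cos (2 * (θ₀ - θ₁)) =
        (Real.cos (4 * θ₀) + Real.cos (4 * θ₁)) / 2 := by
    intro θ₀ θ₁
    have h1 : (4:ℝ) * θ₀ = 2 * (θ₀ + θ₁) + 2 * (θ₀ - θ₁) := by ring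
    have h2 : (4:ℝ) * θ₁ = 2 * (θ₀ + θ₁) - 2 * (θ₀ - θ₁) := by ring
    rw [h1, h2, Real.cos_add, Real.cos_sub]; ring
  refine ⟨fun x₀ x₁ hx₀ hx₁ => key_s17 x₀ x₁ hx₀ hx₁, fun θ₀ θ₁ => ?_, third⟩
  rw [key_s17 (Real.cos (θ₀ + θ₁)) (Real.cos (θ₀ - θ₁))
      ⟨Real.neg_one_le_cos _, Real.cos_le_one _⟩ ⟨Real.neg_one_le_cos _, Real.cos_le_one _⟩]
  congr 1
  rw [← third θ₀ θ₁, Real.cos_two_mul, Real.cos_two_mul]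
end

section
/- Let σ_z = !![1, 0; 0, −1] and, for φ ∈ ℝ, write e^{iφσ_z} = !![e^{iφ}, 0; 0, e^{−iφ}]. Let n ≥ 0, t ≥ 1 be integers, let φ_0, …, φ_n ∈ ℝ satisfy the antisymmetry condition φ_k = −φ_{n−k} for all 0 ≤ k ≤ n, and let s : {1,…,n} → {0,…,t−1} satisfy s_k = s_{n+1−k} for all 1 ≤ k ≤ n. Let U_0, …, U_{t−1} be 2×2 complex unitary matrices each satisfying σ_z U_j σ_z = U_j† (this holds in particular for every twisted embeddable unitary, i.e., every matrix of the form !![e^{iφ/2},0;0,e^{−iφ/2}] · !![cos θ, i sin θ; i sin θ, cos θ] · !![e^{−iφ/2},0;0,e^{iφ/2}]). Then the matrix P = e^{iφ_0 σ_z} · ∏_{k=1}^{n} (U_{s_k} · e^{iφ_k σ_z}) satisfies σ_z P σ_z = P†; in particular both diagonal entries of P are real, and if moreover each U_j has determinant 1, then P has determinant 1 and can be written in the twisted embeddable form !![e^{iφ/2},0;0,e^{−iφ/2}] · !![cos θ, i sin θ; i sin θ, cos θ] · !![e^{−iφ/2},0;0,e^{iφ/2}] for some θ ∈ [0, π] and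 φ ∈ [−π, π]. -/
open Real Matrix

/-- The Pauli matrix `σ_z = !![1, 0; 0, −1]`. -/
noncomputable def sigmaZ : Matrix (Fin 2) (Fin 2) ℂ := !![1, 0; 0, -1]

/-- The x-rotation `e^{iθσ_x} = !![cos θ, i sin θ; i sin θ, cos θ]`. -/
noncomputable def Xmat (θ : ℝ) : Matrix (Fin 2) (Fin 2) ℂ :=
  !![(Real.cos θ : ℂ), Complex.I * (Real.sin θ : ℂ);
     Complex.I * (Real.sin θ : ℂ), (Real.cos θ : ℂ)]

lemma sigmaZ_sq : sigmaZ * sigmaZ = 1 := by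
  ext i j; fin_cases i <;> fin_cases j <;>
    simp [sigmaZ, Matrix.mul_apply, Fin.sum_univ_two, Matrix.one_apply]

lemma sigConj_mul (A B : Matrix (Fin 2) (Fin 2) ℂ) :
    sigmaZ * (A * B) * sigmaZ = (sigmaZ * A * sigmaZ) * (sigmaZ * B * sigmaZ) := by
  calc sigmaZ * (A * B) * sigmaZ = sigmaZ * A * (sigmaZ * sigmaZ) * B * sigmaZ := by
        rw [sigmaZ_sq]; noncomm_ring
    _ = _ := by noncomm_ring
    _ = _ := by noncomm_ring

lemma conj_list (l : List (Matrix (Fin 2) (Fin 2) ℂ)) :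
    sigmaZ * l.prod * sigmaZ = (l.map (fun A => sigmaZ * A * sigmaZ)).prod := by
  induction l with
  | nil => simpa using sigmaZ_sq
  | cons a l ih => rw [List.prod_cons, List.map_cons, List.prod_cons, sigConj_mul, ih]

lemma Zmat_conj (φ : ℝ) : sigmaZ * Zmat φ * sigmaZ = Zmat φ := by
  ext i j; fin_cases i <;> fin_cases j <;>
    simp [sigmaZ, Zmat, Matrix.mul_apply, Fin.sum_univ_two]

lemma Zmat_star (φ : ℝ) : (Zmat φ)ᴴ = Zmat (-φ) := by
  ext i j; fin_cases i <;> fin_cases j <;>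
    simp [Zmat, Matrix.conjTranspose_apply, ← Complex.exp_conj, _root_.map_mul, Complex.conj_I]

lemma Zmat_mul (a b : ℝ) : Zmat a * Zmat b = Zmat (a + b) := by
  ext i j; fin_cases i <;> fin_cases j <;>
    simp [Zmat, Matrix.mul_apply, Fin.sum_univ_two, ← Complex.exp_add] <;> ring_nf

lemma Zmat_zero : Zmat 0 = 1 := by
  ext i j; fin_cases i <;> fin_cases j <;> simp [Zmat, Matrix.one_apply]

lemma Zmat_mem (φ : ℝ) : Zmat φ ∈ Matrix.unitaryGroup (Fin 2) ℂ := by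
  rw [Matrix.mem_unitaryGroup_iff, Matrix.star_eq_conjTranspose, Zmat_star, Zmat_mul]
  simpa using Zmat_zero

lemma Zmat_det (φ : ℝ) : (Zmat φ).det = 1 := by
  simp [Zmat, Matrix.det_fin_two, ← Complex.exp_add]

lemma rev_map_range {α : Type*} (F : ℕ → α) (n : ℕ) :
    ((List.range n).map F).reverse = (List.range n).map (fun k => F (n - 1 - k)) := by
  apply List.ext_getElem
  · simp
  · intro i h1 h2
    simp only [List.getElem_reverse, List.getElem_map, List.getElem_range,
      List.length_map, List.length_range]

lemma shift {M : Type*} [Monoid M] (g f : ℕ → M) (n : ℕ) :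
    g 0 * ((List.range n).map (fun k => f (k+1) * g (k+1))).prod
      = ((List.range n).map (fun k => g k * f (k+1))).prod * g n := by
  induction n with
  | zero => simp
  | succ n ih =>
    rw [List.range_succ, List.map_append, List.map_append, List.prod_append, List.prod_append]
    simp only [List.map_cons, List.map_nil, List.prod_cons, List.prod_nil, mul_one]
    rw [← mul_assoc, ih]
    simp [mul_assoc]


/-- (Twisted embeddability of antisymmetric M-QSP protocols.)
If the phases satisfy `φ_k = −φ_{n−k}`, the oracle labels satisfy `s_k = s_{n+1−k}`,
and each oracle unitary `U_j` satisfies `σ_z U_j σ_z = U_j†`, then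
`P = e^{iφ₀σ_z} · ∏_{k=1}^n (U_{s_k} e^{iφ_kσ_z})` satisfies `σ_z P σ_z = P†`; in
particular both diagonal entries of `P` are real, and if moreover each `det U_j = 1`,
then `det P = 1` and `P` is twisted embeddable:
`P = e^{iψσ_z/2} e^{iθσ_x} e^{−iψσ_z/2}` for some `θ ∈ [0, π]`, `ψ ∈ [−π, π]`. -/
theorem stmt_18 (n t : ℕ) (ht : 1 ≤ t) (φ : ℕ → ℝ) (s : ℕ → ℕ)
    (hφ : ∀ k ≤ n, φ k = -φ (n - k))
    (hs : ∀ k, 1 ≤ k → k ≤ n → s k < t)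
    (hs' : ∀ k, 1 ≤ k → k ≤ n → s k = s (n + 1 - k))
    (U : ℕ → Matrix (Fin 2) (Fin 2) ℂ)
    (hU : ∀ j < t, U j ∈ Matrix.unitaryGroup (Fin 2) ℂ)
    (hUz : ∀ j < t, sigmaZ * U j * sigmaZ = (U j)ᴴ)
    (P : Matrix (Fin 2) (Fin 2) ℂ)
    (hP : P = Zmat (φ 0) * ((List.range n).map (fun k => U (s (k + 1)) * Zmat (φ (k + 1)))).prod) :
    sigmaZ * P * sigmaZ = Pᴴ ∧ (P 0 0).im = 0 ∧ (P 1 1).im = 0 ∧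
    ((∀ j < t, (U j).det = 1) →
      P.det = 1 ∧
      ∃ θ ∈ Set.Icc (0 : ℝ) π, ∃ ψ ∈ Set.Icc (-π) π,
        P = Zmat (ψ / 2) * Xmat θ * Zmat (-(ψ / 2))) := by
  -- Part 1: σ P σ = Pᴴ
  have key : sigmaZ * P * sigmaZ = Pᴴ := by
    rw [hP, sigConj_mul, conj_list, Zmat_conj, Matrix.conjTranspose_mul,
      Matrix.conjTranspose_list_prod]
    simp only [List.map_map]
    rw [rev_map_range, Zmat_star]
    have hL : (List.range n).map
        ((fun A => sigmaZ * A * sigmaZ) ∘ (fun k => U (s (k + 1)) * Zmat (φ (k + 1))))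
        = (List.range n).map (fun k => (U (s (k+1)))ᴴ * Zmat (φ (k + 1))) := by
      apply List.map_congr_left
      intro k hk
      rw [List.mem_range] at hk
      simp only [Function.comp]
      rw [sigConj_mul, Zmat_conj, hUz _ (hs (k+1) (by omega) (by omega))]
    have hR : (List.range n).map
        (fun k => (Matrix.conjTranspose ∘ fun k => U (s (k + 1)) * Zmat (φ (k + 1))) (n - 1 - k))
        = (List.range n).map (fun k => Zmat (φ k) * (U (s (k+1)))ᴴ) := by
      apply List.map_congr_left
      intro k hk
      rw [List.mem_range] at hk
      simp only [Function.comp]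
      rw [show n - 1 - k + 1 = n - k by omega, Matrix.conjTranspose_mul, Zmat_star,
        show -φ (n - k) = φ k from (by rw [hφ k (by omega)]),
        show s (n - k) = s (k+1) from (by rw [hs' (k+1) (by omega) (by omega)]; congr 1; omega)]
    rw [hL, hR, show -φ 0 = φ n from (by have := hφ 0 (by omega); simp at this; linarith)]
    exact shift (fun k => Zmat (φ k)) (fun k => (U (s k))ᴴ) n
  refine ⟨key, ?_, ?_, ?_⟩
  · have h00 := congrFun (congrFun key 0) 0
    simp [sigmaZ, Matrix.mul_apply, Fin.sum_univ_two, Matrix.conjTranspose_apply,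
      Matrix.vecMul, dotProduct] at h00
    have := congrArg Complex.im h00
    simp [Complex.conj_im] at this
    linarith
  · have h11 := congrFun (congrFun key 1) 1
    simp [sigmaZ, Matrix.mul_apply, Fin.sum_univ_two, Matrix.conjTranspose_apply,
      Matrix.vecMul, dotProduct] at h11
    have := congrArg Complex.im h11
    simp [Complex.conj_im] at this
    linarith
  intro hdet
  -- determinant of P
  have hdetP : P.det = 1 := by
    rw [hP, Matrix.det_mul, Zmat_det, one_mul]
    have hlp : ∀ (l : List (Matrix (Fin 2) (Fin 2) ℂ)), l.prod.det = (l.map Matrix.det).prod := by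
      intro l; induction l with
      | nil => simp
      | cons A l ih => simp [Matrix.det_mul, ih]
    rw [hlp]
    apply List.prod_eq_one
    intro x hx
    simp only [List.map_map, List.mem_map, List.mem_range] at hx
    obtain ⟨k, hk, rfl⟩ := hx
    simp [Function.comp, Matrix.det_mul, Zmat_det, hdet _ (hs (k+1) (by omega) (by omega))]
  refine ⟨hdetP, ?_⟩
  -- unitarity of P
  have hPU : P ∈ Matrix.unitaryGroup (Fin 2) ℂ := by
    rw [hP]
    refine mul_mem (Zmat_mem _) (Submonoid.list_prod_mem _ ?_)
    intro x hx
    simp only [List.mem_map, List.mem_range] at hx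
    obtain ⟨k, hk, rfl⟩ := hx
    exact mul_mem (hU _ (hs (k+1) (by omega) (by omega))) (Zmat_mem _)
  have hPPh : P * Pᴴ = 1 := by
    have := (Matrix.mem_unitaryGroup_iff).1 hPU
    rwa [Matrix.star_eq_conjTranspose] at this
  -- reality of diagonal entries, as conj equations
  have him0 : (P 0 0).im = 0 := by
    have h00 := congrFun (congrFun key 0) 0
    simp [sigmaZ, Matrix.mul_apply, Fin.sum_univ_two, Matrix.conjTranspose_apply,
      Matrix.vecMul, dotProduct] at h00
    have := congrArg Complex.im h00
    simp [Complex.conj_im] at this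
    linarith
  have him1 : (P 1 1).im = 0 := by
    have h11 := congrFun (congrFun key 1) 1
    simp [sigmaZ, Matrix.mul_apply, Fin.sum_univ_two, Matrix.conjTranspose_apply,
      Matrix.vecMul, dotProduct] at h11
    have := congrArg Complex.im h11
    simp [Complex.conj_im] at this
    linarith
  have ha : (starRingEnd ℂ) (P 0 0) = P 0 0 := Complex.conj_eq_iff_im.mpr him0
  have hd : (starRingEnd ℂ) (P 1 1) = P 1 1 := Complex.conj_eq_iff_im.mpr him1
  -- off-diagonal relation from key
  have hc : P 1 0 = -(starRingEnd ℂ) (P 0 1) := by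
    have h01 := congrFun (congrFun key 0) 1
    simp [sigmaZ, Matrix.mul_apply, Fin.sum_univ_two, Matrix.conjTranspose_apply,
      Matrix.vecMul, dotProduct] at h01
    have := congrArg (starRingEnd ℂ) h01
    simp at this
    linear_combination -this
  -- unitarity entries
  have h00 : P 0 0 * (starRingEnd ℂ) (P 0 0) + P 0 1 * (starRingEnd ℂ) (P 0 1) = 1 := by
    have := congrFun (congrFun hPPh 0) 0
    simpa [Matrix.mul_apply, Fin.sum_univ_two, Matrix.conjTranspose_apply,
      Matrix.one_apply] using this
  have h11 : P 1 0 * (starRingEnd ℂ) (P 1 0) + P 1 1 * (starRingEnd ℂ) (P 1 1) = 1 := by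
    have := congrFun (congrFun hPPh 1) 1
    simpa [Matrix.mul_apply, Fin.sum_univ_two, Matrix.conjTranspose_apply,
      Matrix.one_apply] using this
  have hdet2 : P 0 0 * P 1 1 - P 0 1 * P 1 0 = 1 := by
    rw [← hdetP, Matrix.det_fin_two]
  -- d = a
  have hda : P 1 1 = P 0 0 := by
    have e1 : P 0 0 * P 0 0 + P 0 1 * (starRingEnd ℂ) (P 0 1) = 1 := by
      rw [ha] at h00
      linear_combination h00
    have e2 : P 1 1 * P 1 1 + P 0 1 * (starRingEnd ℂ) (P 0 1) = 1 := by
      rw [hc] at h11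
      rw [hd] at h11
      simp only [map_neg, Complex.conj_conj] at h11
      linear_combination h11
    have e3 : P 0 0 * P 1 1 + P 0 1 * (starRingEnd ℂ) (P 0 1) = 1 := by
      rw [hc] at hdet2
      linear_combination hdet2
    by_cases h0 : P 0 0 = 0
    · have : P 1 1 * P 1 1 = 0 := by rw [h0] at e1; linear_combination e2 - e1
      rw [h0]; exact mul_self_eq_zero.mp this
    · exact mul_left_cancel₀ h0 (by linear_combination e3 - e1)
  -- real diagonal value
  set A := (P 0 0).re with hAdef
  have haA : P 0 0 = (A : ℂ) := by
    rw [← Complex.re_add_im (P 0 0), him0]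
    simp
    exact hAdef.symm
  have e1 : P 0 0 * P 0 0 + P 0 1 * (starRingEnd ℂ) (P 0 1) = 1 := by
    rw [ha] at h00
    linear_combination h00
  have ereal : A * A + Complex.normSq (P 0 1) = 1 := by
    rw [haA, Complex.mul_conj] at e1
    exact_mod_cast e1
  have hA1 : -1 ≤ A := by nlinarith [Complex.normSq_nonneg (P 0 1)]
  have hA2 : A ≤ 1 := by nlinarith [Complex.normSq_nonneg (P 0 1)]
  have hcos : Real.cos (Real.arccos A) = A := Real.cos_arccos hA1 hA2
  set r := ‖P 0 1‖ with hr
  have hsin : Real.sin (Real.arccos A) = r := by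
    rw [Real.sin_arccos, show 1 - A^2 = Complex.normSq (P 0 1) by nlinarith,
      hr, Complex.norm_def]
  obtain ⟨ψ, hψ1, hψ2, hbψ⟩ : ∃ ψ : ℝ, -π ≤ ψ ∧ ψ ≤ π ∧
      P 0 1 = Complex.I * (r : ℂ) * Complex.exp ((ψ : ℂ) * Complex.I) := by
    by_cases hb : P 0 1 = 0
    · exact ⟨0, by linarith [Real.pi_pos], by linarith [Real.pi_pos], by rw [hb, hr, hb]; simp⟩
    · refine ⟨(P 0 1 / (Complex.I * (‖P 0 1‖ : ℂ))).arg,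
        (Complex.neg_pi_lt_arg _).le, Complex.arg_le_pi _, ?_⟩
      set w := P 0 1 / (Complex.I * (‖P 0 1‖ : ℂ)) with hw
      have hne : (Complex.I * (‖P 0 1‖ : ℂ)) ≠ 0 := by
        simp [Complex.I_ne_zero, hb, norm_ne_zero_iff]
      have habs : ‖w‖ = 1 := by
        rw [hw, norm_div, norm_mul]
        simp [Complex.norm_I]
        exact hb
      have hrec := Complex.norm_mul_exp_arg_mul_I w
      rw [habs, Complex.ofReal_one, one_mul] at hrec
      rw [hrec, hw]
      field_simp
      rw [hr, div_self (by simpa using hb)]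
  have hconjexp : (starRingEnd ℂ) (Complex.exp ((ψ : ℂ) * Complex.I))
      = Complex.exp (-((ψ : ℂ) * Complex.I)) := by
    rw [← Complex.exp_conj]
    congr 1
    simp [Complex.conj_I]
  have hcb : P 1 0 = Complex.I * (r : ℂ)
      * Complex.exp (-((ψ : ℂ) * Complex.I)) := by
    rw [hc, hbψ]
    simp only [_root_.map_mul, Complex.conj_I, hconjexp, Complex.conj_ofReal]
    ring
  have he1 : Complex.exp (Complex.I * ((ψ:ℂ) / 2)) * Complex.exp (-(Complex.I * ((ψ:ℂ) / 2))) = 1 := by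
    rw [← Complex.exp_add]; simp
  have he2 : Complex.exp (Complex.I * ((ψ:ℂ) / 2)) * Complex.exp (Complex.I * ((ψ:ℂ) / 2))
      = Complex.exp ((ψ:ℂ) * Complex.I) := by
    rw [← Complex.exp_add]; congr 1; ring
  have he3 : Complex.exp (-(Complex.I * ((ψ:ℂ) / 2))) * Complex.exp (-(Complex.I * ((ψ:ℂ) / 2)))
      = Complex.exp (-((ψ:ℂ) * Complex.I)) := by
    rw [← Complex.exp_add]; congr 1; ring
  refine ⟨Real.arccos A, ⟨Real.arccos_nonneg A, Real.arccos_le_pi A⟩, ψ, ⟨hψ1, hψ2⟩, ?_⟩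
  ext i j
  fin_cases i <;> fin_cases j <;>
    simp [Zmat, Xmat, Matrix.mul_apply, Fin.sum_univ_two, hcos, hsin]
  · rw [haA]
    linear_combination (-(A:ℂ)) * he1
  · rw [hbψ]
    linear_combination (-(Complex.I * (r:ℂ))) * he2
  · rw [hcb]
    linear_combination (-(Complex.I * (r:ℂ))) * he3
  · rw [hda, haA]
    linear_combination (-(A:ℂ)) * he1
end

section
/- For x ∈ [−1,1] let W(x) = !![x, i√(1−x²); i√(1−x²), x] and for φ ∈ ℝ let Z(φ) = !![e^{iφ}, 0; 0, e^{−iφ}] (2×2 complex matrices). Then for all x₀, x₁ ∈ [−1, 1], the (0,0) entry of the product Z(−π/4) · W(x₀) · Z(π/4) · W(x₁) · Z(−π/4) · W(x₀) · Z(π/4) equals T₂(x₀) · x₁ = (2x₀² − 1) · x₁. (This is the multiplication gadget: the two-variable M-QSP protocol with phases {−π/4, π/4, −π/4, π/4} and oracle sequence {0, 1, 0} achieves the function f(x₀, x₁) = T₂(x₀)·x₁.) -/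
open Real

/-- (Multiplication gadget.) For all `x₀, x₁ ∈ [−1, 1]`, the `(0,0)` entry
of `Z(−π/4)·W(x₀)·Z(π/4)·W(x₁)·Z(−π/4)·W(x₀)·Z(π/4)` equals `T₂(x₀)·x₁ = (2x₀²−1)·x₁`. -/
theorem stmt_19 (x₀ x₁ : ℝ) (hx₀ : x₀ ∈ Set.Icc (-1 : ℝ) 1) (hx₁ : x₁ ∈ Set.Icc (-1 : ℝ) 1) :
    (Zmat (-(π / 4)) * Wmat x₀ * Zmat (π / 4) * Wmat x₁ * Zmat (-(π / 4)) * Wmat x₀ *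
        Zmat (π / 4)) 0 0 =
      Complex.ofReal ((2 * x₀ ^ 2 - 1) * x₁) := by
  have h0 : (0:ℝ) ≤ 1 - x₀ ^ 2 := by nlinarith [hx₀.1, hx₀.2]
  have h1 : (0:ℝ) ≤ 1 - x₁ ^ 2 := by nlinarith [hx₁.1, hx₁.2]
  have hs : ((Real.sqrt (1 - x₀ ^ 2) : ℝ) : ℂ) ^ 2 = 1 - (x₀:ℂ) ^ 2 := by
    rw [← Complex.ofReal_pow, Real.sq_sqrt h0]; push_cast; ring
  have ht : ((Real.sqrt (1 - x₁ ^ 2) : ℝ) : ℂ) ^ 2 = 1 - (x₁:ℂ) ^ 2 := by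
    rw [← Complex.ofReal_pow, Real.sq_sqrt h1]; push_cast; ring
  set b : ℂ := Complex.exp (Complex.I * ((π:ℂ) / 4)) with hbdef
  have hb2 : b ^ 2 = Complex.I := by
    rw [hbdef, sq, ← Complex.exp_add]
    have h2 : Complex.I * ((π:ℂ)/4) + Complex.I * ((π:ℂ)/4) = ((π/2 : ℝ) : ℂ) * Complex.I := by
      push_cast; ring
    rw [h2, Complex.exp_mul_I]
    simp
  have hb4 : b ^ 4 = -1 := by
    have : b ^ 4 = (b ^ 2) ^ 2 := by ring
    rw [this, hb2, Complex.I_sq]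
  have ha : Complex.exp (-(Complex.I * ((π:ℂ) / 4))) = -Complex.I * b := by
    rw [Complex.exp_neg, ← hbdef]
    have : (-Complex.I * b) * b = 1 := by
      have : (-Complex.I * b) * b = -Complex.I * b ^ 2 := by ring
      rw [this, hb2]; simp
    exact inv_eq_of_mul_eq_one_left this
  have hj : Complex.I ^ 2 = -1 := Complex.I_sq
  simp only [Zmat, Wmat, Matrix.mul_apply, Fin.sum_univ_two, Matrix.cons_val',
    Matrix.cons_val_zero, Matrix.cons_val_one, Matrix.head_cons, Matrix.empty_val',
    Matrix.cons_val_fin_one, Matrix.head_fin_const, Matrix.of_apply]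
  push_cast
  rw [show Complex.I * -((π:ℂ)/4) = -(Complex.I * ((π:ℂ)/4)) from by ring, neg_neg, ha, ← hbdef]
  set s : ℂ := ((Real.sqrt (1 - x₀ ^ 2) : ℝ) : ℂ)
  set t : ℂ := ((Real.sqrt (1 - x₁ ^ 2) : ℝ) : ℂ)
  linear_combination
    ((x₀:ℂ)^2*x₁*Complex.I^2 - s*t*x₀*Complex.I^5 - s*t*x₀*Complex.I^3 + s^2*x₁*Complex.I^4) * hb4
    + (-(x₀:ℂ)^2*x₁ + s*t*x₀*Complex.I^3 - s^2*x₁*Complex.I^2 + s^2*x₁) * hj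
    + (-(x₁:ℂ)) * hs
end
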